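/- arXiv:math/0207056 — 2 statements merged into one kernel-verified Lean document; each statement's English description precedes it below -/
import Mathlib

section
/- Let R be a commutative ℝ-algebra and let m be a natural number. Given c : Fin m → R and k : Fin m → ℝ with k j ≠ 0 for every j, set χ = ∏_{j} (C(c j) + C(algebraMap ℝ R (k j)) · X) in the polynomial ring R[X]. If x, u, w ∈ R and there exist a, b ∈ R[X] with χ² · C x = C u · a + C w · b, then x lies in the ideal of R generated by u and w. -/
open Polynomial

/-- Lemma 3.2 (coefficient comparison): if `χ ^ 2 * C x = C u * a + C w * b`
in `R[X]` with `χ = ∏ⱼ (C (c j) + C (k j) • X)` and nonzero weights,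
then `x ∈ (u, w)` in `R`. -/
theorem coeff_comparison {R : Type*} [CommRing R] [Algebra ℝ R]
    (m : ℕ) (c : Fin m → R) (k : Fin m → ℝ) (hk : ∀ j, k j ≠ 0)
    (x u w : R)
    (h : ∃ a b : R[X],
      (∏ j : Fin m, (C (c j) + C (algebraMap ℝ R (k j)) * X)) ^ 2 * C x
        = C u * a + C w * b) :
    x ∈ Ideal.span {u, w} := by
  obtain ⟨a, b, h⟩ := h
  set I : Ideal R := Ideal.span {u, w}
  have hu : u ∈ I := Ideal.subset_span (by simp)
  have hw : w ∈ I := Ideal.subset_span (by simp [Set.mem_insert_iff])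
  -- scale to make χ monic
  set e : Fin m → R := fun j => algebraMap ℝ R (k j)⁻¹ with he
  have hscale : (∏ j : Fin m, C (e j)) * ∏ j : Fin m, (C (c j) + C (algebraMap ℝ R (k j)) * X)
      = ∏ j : Fin m, (X + C (e j * c j)) := by
    rw [← Finset.prod_mul_distrib]
    refine Finset.prod_congr rfl fun j _ => ?_
    have h1 : e j * algebraMap ℝ R (k j) = 1 := by
      rw [he]; rw [← map_mul, inv_mul_cancel₀ (hk j), map_one]
    rw [mul_add, ← C_mul, ← mul_assoc, ← C_mul, h1, C_1, one_mul]
    ring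
  have hmonic : (∏ j : Fin m, (X + C (e j * c j))).Monic :=
    monic_prod_of_monic _ _ fun j _ => monic_X_add_C _
  -- multiply the hypothesis by (∏ C (e j))^2
  have h2 : (∏ j : Fin m, (X + C (e j * c j))) ^ 2 * C x
      = C u * ((∏ j : Fin m, C (e j)) ^ 2 * a)
        + C w * ((∏ j : Fin m, C (e j)) ^ 2 * b) := by
    rw [← hscale, mul_pow]
    calc (∏ j : Fin m, C (e j)) ^ 2 *
          (∏ j : Fin m, (C (c j) + C (algebraMap ℝ R (k j)) * X)) ^ 2 * C x
        = (∏ j : Fin m, C (e j)) ^ 2 *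
          ((∏ j : Fin m, (C (c j) + C (algebraMap ℝ R (k j)) * X)) ^ 2 * C x) := by ring
      _ = (∏ j : Fin m, C (e j)) ^ 2 * (C u * a + C w * b) := by rw [h]
      _ = _ := by ring
  -- reduce mod I
  set f := Ideal.Quotient.mk I
  have h3 := congrArg (Polynomial.map f) h2
  have hfu : f u = 0 := Ideal.Quotient.eq_zero_iff_mem.mpr hu
  have hfw : f w = 0 := Ideal.Quotient.eq_zero_iff_mem.mpr hw
  simp only [Polynomial.map_add, Polynomial.map_mul, Polynomial.map_pow, map_C,
    hfu, hfw, C_0, zero_mul, add_zero] at h3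
  have hmonic' : ((∏ j : Fin m, (X + C (e j * c j))).map f).Monic := hmonic.map f
  have h4 : ((∏ j : Fin m, (X + C (e j * c j))).map f) ^ 2 * C (f x) = 0 := h3
  have h5 : C (f x) = 0 := ((hmonic'.pow 2).mul_right_eq_zero_iff).mp h4
  have : f x = 0 := by simpa using congrArg (fun p => p.coeff 0) h5
  exact Ideal.Quotient.eq_zero_iff_mem.mp this
end

section
/- Let R be a commutative ℝ-algebra and let m be a natural number. Given c : Fin m → R and k : Fin m → ℝ with k j ≠ 0 for every j, set χ = ∏_{j} (C(c j) + C(algebraMap ℝ R (k j)) · X) in the polynomial ring R[X]. Let x, u, w ∈ R and suppose χ³ · C x lies in the ideal of R[X] generated by χ · C u and χ · C w. Then x lies in the ideal of R generated by u and w. -/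
open Polynomial

/-- Lemma 3.2 (algebraic core): if `χ ^ 3 * C x ∈ (χ * C u, χ * C w)` in `R[X]`
with `χ = ∏ⱼ (C (c j) + C (k j) • X)` and nonzero weights, then `x ∈ (u, w)`
in `R`. -/
theorem lemma_3_2_core {R : Type*} [CommRing R] [Algebra ℝ R]
    (m : ℕ) (c : Fin m → R) (k : Fin m → ℝ) (hk : ∀ j, k j ≠ 0)
    (x u w : R)
    (h : (∏ j : Fin m, (C (c j) + C (algebraMap ℝ R (k j)) * X)) ^ 3 * C x ∈
      Ideal.span {(∏ j : Fin m, (C (c j) + C (algebraMap ℝ R (k j)) * X)) * C u,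
        (∏ j : Fin m, (C (c j) + C (algebraMap ℝ R (k j)) * X)) * C w}) :
    x ∈ Ideal.span {u, w} := by
  set χ : R[X] := ∏ j : Fin m, (C (c j) + C (algebraMap ℝ R (k j)) * X) with hχ
  set e : R := ∏ j : Fin m, algebraMap ℝ R (k j) with he
  -- each factor has natDegree ≤ 1 and coeff 1 equal to the weight
  have hdeg : ∀ j : Fin m, (C (c j) + C (algebraMap ℝ R (k j)) * X).natDegree ≤ 1 := by
    intro j
    refine (natDegree_add_le _ _).trans (max_le ((natDegree_C _).trans_le (Nat.zero_le 1)) ?_)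
    exact (natDegree_C_mul_le _ _).trans natDegree_X_le
  have hcoeff1 : ∀ j : Fin m,
      (C (c j) + C (algebraMap ℝ R (k j)) * X).coeff 1 = algebraMap ℝ R (k j) := by
    intro j; simp [coeff_C]
  -- coeff of χ at m
  have hχm : χ.coeff m = e := by
    have := coeff_prod_of_natDegree_le (s := (Finset.univ : Finset (Fin m)))
      (fun j => C (c j) + C (algebraMap ℝ R (k j)) * X) 1 (fun j _ => hdeg j)
    simpa [hcoeff1, he, hχ] using this
  have hχdeg : χ.natDegree ≤ m := by
    refine (natDegree_prod_le _ _).trans ?_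
    have hs : ∑ j : Fin m, (C (c j) + C (algebraMap ℝ R (k j)) * X).natDegree
        ≤ ∑ _j : Fin m, (1 : ℕ) := Finset.sum_le_sum fun j _ => hdeg j
    simpa using hs
  have hχ3 : (χ ^ 3).coeff (3 * m) = e ^ 3 := by
    rw [coeff_pow_of_natDegree_le hχdeg, hχm]
  have heu : IsUnit e := by
    rw [he]
    exact Finset.prod_induction _ IsUnit (fun _ _ => IsUnit.mul) isUnit_one
      (fun j _ => ((hk j).isUnit).map (algebraMap ℝ R))
  -- extract coefficients of the membership relation
  rw [Ideal.mem_span_pair] at h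
  obtain ⟨a, b, hab⟩ := h
  have hco := congrArg (fun p : R[X] => p.coeff (3 * m)) hab
  have h1 : a * (χ * C u) = (a * χ) * C u := by ring
  have h2 : b * (χ * C w) = (b * χ) * C w := by ring
  rw [h1, h2, coeff_add, coeff_mul_C, coeff_mul_C, coeff_mul_C, hχ3] at hco
  -- so e^3 * x = A * u + B * w  with A B coefficients
  obtain ⟨ε, hε⟩ := heu.pow 3
  have hx : x = (↑ε⁻¹ * (a * χ).coeff (3 * m)) * u + (↑ε⁻¹ * (b * χ).coeff (3 * m)) * w := by
    have : (ε : R) * x = (a * χ).coeff (3 * m) * u + (b * χ).coeff (3 * m) * w := by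
      rw [hε]; exact hco.symm
    calc x = (↑ε⁻¹ : R) * ((ε : R) * x) := by
            rw [← mul_assoc, Units.inv_mul, one_mul]
      _ = (↑ε⁻¹ * (a * χ).coeff (3 * m)) * u + (↑ε⁻¹ * (b * χ).coeff (3 * m)) * w := by
            rw [this]; ring
  rw [Ideal.mem_span_pair]
  exact ⟨_, _, hx.symm⟩
end
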